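/- Let ψ : ℝ → ℝ be a C^∞ function satisfying the ODE (E) at every t ∈ ℝ, with ψ′(t) ≠ 0 for all t, and such that ψ″ − ψ is not identically zero. If C₁, C₂ ∈ ℝ are constants such that the function t ↦ ψ(t) + C₁·e^{t} + C₂·e^{−t} also satisfies (E) at every t ∈ ℝ, then C₁ = 0 and C₂ = 0. -/

import Mathlib

/-- The ODE (E): x′·x‴ = x·x″ − 2·x″² + x′² + x² at the point `t`. -/
def SatE (x : ℝ → ℝ) (t : ℝ) : Prop :=
  deriv x t * deriv (deriv (deriv x)) t =
    x t * deriv (deriv x) t - 2 * (deriv (deriv x) t) ^ 2 + (deriv x t) ^ 2 + (x t) ^ 2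

/-- Derivative of `a·e^t + b·e^{-t}`. -/
lemma hasDerivAt_fam (a b t : ℝ) :
    HasDerivAt (fun s => a * Real.exp s + b * Real.exp (-s))
      (a * Real.exp t - b * Real.exp (-t)) t := by
  have h1 : HasDerivAt (fun s : ℝ => Real.exp (-s)) (-Real.exp (-t)) t := by
    simpa [Function.comp_def] using (Real.hasDerivAt_exp (-t)).comp t (hasDerivAt_neg t)
  have := ((Real.hasDerivAt_exp t).const_mul a).add (h1.const_mul b)
  exact this.congr_deriv (by ring)

/-- Derivative of `a·e^t - b·e^{-t}`. -/
lemma hasDerivAt_fam' (a b t : ℝ) :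
    HasDerivAt (fun s => a * Real.exp s - b * Real.exp (-s))
      (a * Real.exp t + b * Real.exp (-t)) t := by
  have h1 : HasDerivAt (fun s : ℝ => Real.exp (-s)) (-Real.exp (-t)) t := by
    simpa [Function.comp_def] using (Real.hasDerivAt_exp (-t)).comp t (hasDerivAt_neg t)
  have := ((Real.hasDerivAt_exp t).const_mul a).sub (h1.const_mul b)
  exact this.congr_deriv (by ring)

theorem stmt10 (ψ : ℝ → ℝ) (hψ : ContDiff ℝ (⊤ : ℕ∞) ψ)
    (hE : ∀ t : ℝ, SatE ψ t)
    (hψ' : ∀ t : ℝ, deriv ψ t ≠ 0)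
    (hnz : ∃ t : ℝ, deriv (deriv ψ) t - ψ t ≠ 0)
    (C₁ C₂ : ℝ)
    (hE' : ∀ t : ℝ, SatE (fun s => ψ s + C₁ * Real.exp s + C₂ * Real.exp (-s)) t) :
    C₁ = 0 ∧ C₂ = 0 := by
  -- smoothness bookkeeping
  have h0 : ContDiff ℝ ((⊤ : ℕ∞) : WithTop ℕ∞) ψ := hψ.of_le (by simp)
  have h1 : ContDiff ℝ ((⊤ : ℕ∞) : WithTop ℕ∞) (deriv ψ) :=
    (contDiff_infty_iff_deriv.mp h0).2
  have h2 : ContDiff ℝ ((⊤ : ℕ∞) : WithTop ℕ∞) (deriv (deriv ψ)) :=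
    (contDiff_infty_iff_deriv.mp h1).2
  have hd0 : Differentiable ℝ ψ := (contDiff_infty_iff_deriv.mp h0).1
  have hd1 : Differentiable ℝ (deriv ψ) := (contDiff_infty_iff_deriv.mp h1).1
  have hd2 : Differentiable ℝ (deriv (deriv ψ)) := (contDiff_infty_iff_deriv.mp h2).1
  set φ : ℝ → ℝ := fun s => ψ s + C₁ * Real.exp s + C₂ * Real.exp (-s) with hφdef
  -- first derivative of φ
  have hdφ : ∀ t, HasDerivAt φ (deriv ψ t + (C₁ * Real.exp t - C₂ * Real.exp (-t))) t := by
    intro t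
    have h := ((hd0 t).hasDerivAt).add (hasDerivAt_fam C₁ C₂ t)
    exact h.congr_of_eventuallyEq (Filter.Eventually.of_forall fun s => by
      simp only [hφdef, Pi.add_apply]; ring)
  have e1 : deriv φ = fun t => deriv ψ t + (C₁ * Real.exp t - C₂ * Real.exp (-t)) :=
    funext fun t => (hdφ t).deriv
  -- second derivative of φ
  have hdφ1 : ∀ t, HasDerivAt (deriv φ)
      (deriv (deriv ψ) t + (C₁ * Real.exp t + C₂ * Real.exp (-t))) t := by
    intro t
    rw [e1]
    exact ((hd1 t).hasDerivAt).add (hasDerivAt_fam' C₁ C₂ t)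
  have e2 : deriv (deriv φ) = fun t =>
      deriv (deriv ψ) t + (C₁ * Real.exp t + C₂ * Real.exp (-t)) :=
    funext fun t => (hdφ1 t).deriv
  -- third derivative of φ
  have e3 : ∀ t, deriv (deriv (deriv φ)) t =
      deriv (deriv (deriv ψ)) t + (C₁ * Real.exp t - C₂ * Real.exp (-t)) := by
    intro t
    rw [e2]
    exact (((hd2 t).hasDerivAt).add (hasDerivAt_fam C₁ C₂ t)).deriv
  -- key identity (B):  u′·(ψ‴ − ψ′) + 3u·(ψ″ − ψ) = 0
  have hB : ∀ t, (C₁ * Real.exp t - C₂ * Real.exp (-t)) *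
        (deriv (deriv (deriv ψ)) t - deriv ψ t) +
      3 * (C₁ * Real.exp t + C₂ * Real.exp (-t)) * (deriv (deriv ψ) t - ψ t) = 0 := by
    intro t
    have hp := hE' t
    have hq := hE t
    simp only [SatE] at hp hq
    rw [e3 t, e2, e1] at hp
    simp only [hφdef] at hp
    linear_combination hp - hq
  -- identity (A): (ψ″-ψ) · (u′·(2ψ″+ψ) - 3u·ψ′) = 0
  have hA : ∀ t, (deriv (deriv ψ) t - ψ t) *
      ((C₁ * Real.exp t - C₂ * Real.exp (-t)) * (2 * deriv (deriv ψ) t + ψ t) -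
        3 * (C₁ * Real.exp t + C₂ * Real.exp (-t)) * deriv ψ t) = 0 := by
    intro t
    have hq := hE t
    simp only [SatE] at hq
    linear_combination (C₁ * Real.exp t - C₂ * Real.exp (-t)) * hq - deriv ψ t * hB t
  -- the auxiliary function F and its derivative
  set F : ℝ → ℝ := fun t => (C₁ * Real.exp t - C₂ * Real.exp (-t)) *
      (2 * deriv (deriv ψ) t + ψ t) -
      3 * (C₁ * Real.exp t + C₂ * Real.exp (-t)) * deriv ψ t with hFdef
  have hdF : ∀ t, HasDerivAt F
      ((C₁ * Real.exp t + C₂ * Real.exp (-t)) * (2 * deriv (deriv ψ) t + ψ t) +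
        (C₁ * Real.exp t - C₂ * Real.exp (-t)) * (2 * deriv (deriv (deriv ψ)) t + deriv ψ t) -
        ((C₁ * Real.exp t - C₂ * Real.exp (-t)) * 3 * deriv ψ t +
          3 * (C₁ * Real.exp t + C₂ * Real.exp (-t)) * deriv (deriv ψ) t)) t := by
    intro t
    have hg : HasDerivAt (fun s => 2 * deriv (deriv ψ) s + ψ s)
        (2 * deriv (deriv (deriv ψ)) t + deriv ψ t) t :=
      ((hd2 t).hasDerivAt.const_mul 2).add (hd0 t).hasDerivAt
    have hm1 := (hasDerivAt_fam' C₁ C₂ t).mul hg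
    have hm2 := ((hasDerivAt_fam C₁ C₂ t).mul (hd1 t).hasDerivAt).const_mul 3
    have h := hm1.sub hm2
    refine (h.congr_of_eventuallyEq (Filter.Eventually.of_forall fun s => by
      simp only [hFdef, Pi.sub_apply, Pi.mul_apply]; ring)).congr_deriv ?_
    ring
  -- locate an interval where ψ″ - ψ ≠ 0
  obtain ⟨t₀, hv0⟩ := hnz
  have hvcont : Continuous (fun t => deriv (deriv ψ) t - ψ t) :=
    (h2.continuous).sub h0.continuous
  have hev : ∀ᶠ y in nhds t₀, deriv (deriv ψ) y - ψ y ≠ 0 :=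
    hvcont.continuousAt.eventually_ne hv0
  rw [Metric.eventually_nhds_iff] at hev
  obtain ⟨ε, hε, hball⟩ := hev
  -- on the ball, F = 0
  have hFz : ∀ s, dist s t₀ < ε → F s = 0 := by
    intro s hs
    have := hA s
    rcases mul_eq_zero.mp this with h | h
    · exact absurd h (hball hs)
    · simpa [hFdef] using h
  -- on the ball, u = 0
  have huz : ∀ s, dist s t₀ < ε → C₁ * Real.exp s + C₂ * Real.exp (-s) = 0 := by
    intro s hs
    have hmem : s ∈ Metric.ball t₀ ε := by simpa [Metric.mem_ball] using hs
    have hevF : F =ᶠ[nhds s] (fun _ => 0) := by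
      filter_upwards [Metric.isOpen_ball.eventually_mem hmem] with y hy
      exact hFz y (by simpa [Metric.mem_ball] using hy)
    have hDzero : deriv F s = 0 := by rw [hevF.deriv_eq]; simp
    have hD := (hdF s).deriv
    rw [hDzero] at hD
    -- from hD and hB s :  -7·u·(ψ″-ψ) = 0
    have hu7 : (C₁ * Real.exp s + C₂ * Real.exp (-s)) * (deriv (deriv ψ) s - ψ s) = 0 := by
      linear_combination (2/7 : ℝ) * hB s + (1/7 : ℝ) * hD
    rcases mul_eq_zero.mp hu7 with h | h
    · exact h
    · exact absurd h (hball hs)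
  -- two points in the ball kill C₁ and C₂
  have hs1 : dist t₀ t₀ < ε := by simpa using hε
  have hs2 : dist (t₀ + ε / 2) t₀ < ε := by
    rw [Real.dist_eq]
    rw [show t₀ + ε / 2 - t₀ = ε / 2 by ring, abs_of_pos (by linarith)]
    linarith
  have hA1 := huz t₀ hs1
  have hA2 := huz (t₀ + ε / 2) hs2
  have hexp1 : Real.exp (t₀ - (t₀ + ε / 2)) = Real.exp t₀ * Real.exp (-(t₀ + ε / 2)) := by
    rw [← Real.exp_add]; ring_nf
  have hexp2 : Real.exp ((t₀ + ε / 2) - t₀) = Real.exp (t₀ + ε / 2) * Real.exp (-t₀) := by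
    rw [← Real.exp_add]; ring_nf
  have hkey : C₁ * (Real.exp (t₀ - (t₀ + ε / 2)) - Real.exp ((t₀ + ε / 2) - t₀)) = 0 := by
    rw [hexp1, hexp2]
    linear_combination Real.exp (-(t₀ + ε / 2)) * hA1 - Real.exp (-t₀) * hA2
  have hne : Real.exp (t₀ - (t₀ + ε / 2)) - Real.exp ((t₀ + ε / 2) - t₀) ≠ 0 := by
    refine sub_ne_zero.mpr fun h => ?_
    have := Real.exp_eq_exp.mp h
    linarith
  have hC1 : C₁ = 0 := by
    rcases mul_eq_zero.mp hkey with h | h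
    · exact h
    · exact absurd h hne
  refine ⟨hC1, ?_⟩
  rw [hC1, zero_mul, zero_add] at hA1
  exact (mul_eq_zero.mp hA1).resolve_right (Real.exp_ne_zero _)
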